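/- arXiv:1812.08523 — 3 statements merged into one kernel-verified Lean document; each statement's English description precedes it below -/
import Mathlib

section
/- Let p | Δ be a prime and h ∈ A_Δ, and write Q(h) = n/Δ + ℤ with n ∈ ℤ/Δℤ. Then h has a representative in 𝔡_p·𝔡⁻¹ if and only if p divides n. -/
open NumberField
open scoped nonZeroDivisors

attribute [local instance] Classical.propDecidable

noncomputable section

/-- `d` is a fundamental discriminant (with `1` allowed, corresponding to the
trivial discriminant): either `d ≡ 1 (mod 4)` and `d` is squarefree, or
`d = 4m` with `m` squarefree and `m ≡ 2, 3 (mod 4)`. -/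
def IsFundamentalDiscriminant (d : ℤ) : Prop :=
  (d % 4 = 1 ∧ Squarefree d) ∨
  (d % 4 = 0 ∧ Squarefree (d / 4) ∧ (d / 4 % 4 = 2 ∨ d / 4 % 4 = 3))

/-- Setup: the real quadratic field `F = ℚ(√Δ) ⊂ ℝ` of fundamental discriminant
`Δ > 1`, given as an abstract number field `F` of degree `2`, together with a real
embedding `ι : F → ℝ`, the nontrivial Galois conjugation `σ : F → F` (restricting
to `σO` on the ring of integers) and the totally positive square root `sΔ` of `Δ`
in `𝓞 F` (so that `𝔡 = (sΔ)` is the different ideal and `𝔡⁻¹ = (1/√Δ)𝓞 F`). -/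
structure QS where
  F : Type
  [fld : Field F]
  [nf : NumberField F]
  Δ : ℤ
  hΔ : 1 < Δ
  hfund : IsFundamentalDiscriminant Δ
  hdeg : Module.finrank ℚ F = 2
  ι : F →+* ℝ
  σ : F ≃+* F
  hσ : ∀ x, σ (σ x) = x
  hσne : σ ≠ RingEquiv.refl F
  sΔ : 𝓞 F
  hsΔ : (algebraMap (𝓞 F) F sΔ) * (algebraMap (𝓞 F) F sΔ) = (Δ : F)
  hsΔpos : 0 < ι (algebraMap (𝓞 F) F sΔ)
  hsΔσ : σ (algebraMap (𝓞 F) F sΔ) = - algebraMap (𝓞 F) F sΔ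
  σO : 𝓞 F →+* 𝓞 F
  hσO : ∀ x : 𝓞 F, algebraMap (𝓞 F) F (σO x) = σ (algebraMap (𝓞 F) F x)

attribute [instance] QS.fld QS.nf

/-- The inclusion `𝓞 F → F`. -/
def QS.toF (S : QS) (x : 𝓞 S.F) : S.F := algebraMap (𝓞 S.F) S.F x

/-- `√Δ` as an element of `F`. -/
def QS.sqrtΔ (S : QS) : S.F := S.toF S.sΔ

/-- `x ∈ F` is totally positive. -/
def QS.Pos (S : QS) (x : S.F) : Prop := 0 < S.ι x ∧ 0 < S.ι (S.σ x)

/-- `x ∈ F` is an algebraic integer, i.e. lies in `𝓞 F`. -/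
def QS.isInt (S : QS) (x : S.F) : Prop := ∃ a : 𝓞 S.F, S.toF a = x

/-- `x ∈ 𝔡⁻¹ = (1/√Δ)𝓞 F`. -/
def QS.inDual (S : QS) (x : S.F) : Prop := S.isInt (S.sqrtΔ * x)

/-- The norm `Nm(x) = x x'`, computed in `ℝ` via the embedding `ι`. -/
def QS.NmR (S : QS) (x : S.F) : ℝ := S.ι x * S.ι (S.σ x)

/-- The trace `Tr(x) = x + x'`, computed in `ℝ` via the embedding `ι`. -/
def QS.TrR (S : QS) (x : S.F) : ℝ := S.ι x + S.ι (S.σ x)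

/-- The different ideal `𝔡 = (√Δ)` of `𝓞 F`. -/
def QS.dIdeal (S : QS) : Ideal (𝓞 S.F) := Ideal.span {S.sΔ}

/-- The sign of `x ∈ F` (under the fixed real embedding). -/
def QS.sgn (S : QS) (x : S.F) : ℤ := if 0 < S.ι x then 1 else -1

/-- `r(x) = |x/x'|`. -/
def QS.rQ (S : QS) (x : S.F) : ℝ := |S.ι x / S.ι (S.σ x)|

/-- `P` is the unique prime ideal of `𝓞 F` above the rational prime `p`. -/
def QS.uniquePrimeAbove (S : QS) (p : ℕ) (P : Ideal (𝓞 S.F)) : Prop :=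
  P.IsPrime ∧ P ≠ ⊥ ∧ P ≠ ⊤ ∧ (p : 𝓞 S.F) ∈ P ∧
    ∀ Q : Ideal (𝓞 S.F), Q.IsPrime → Q ≠ ⊥ → Q ≠ ⊤ → (p : 𝓞 S.F) ∈ Q → Q = P

/-- The set `Nm⁻(𝔟) = 𝔟/𝔟'` of `x ∈ F` with `x·𝔟' ⊆ 𝔟` (for invertible `𝔟`
this is exactly the fractional ideal `𝔟 (𝔟')⁻¹`). -/
def QS.nmMinus (S : QS) (b : Ideal (𝓞 S.F)) : Set S.F :=
  {x | ∀ y ∈ b, ∃ c ∈ b, S.toF c = x * S.toF (S.σO y)}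

/-- The set `Nm⁻(𝔟)𝔡⁻¹ = 𝔟 (𝔟')⁻¹ 𝔡⁻¹`, i.e. those `x ∈ F` with `x √Δ 𝔟' ⊆ 𝔟`. -/
def QS.nmMinusDual (S : QS) (b : Ideal (𝓞 S.F)) : Set S.F :=
  {x | ∀ y ∈ b, ∃ c ∈ b, S.toF c = x * S.sqrtΔ * S.toF (S.σO y)}

/-- `x ≡ h` in `A_Δ = Nm⁻(𝔟)𝔡⁻¹ / Nm⁻(𝔟)` under the canonical identification
with `𝔡⁻¹/𝓞 F`: the difference decomposes as an element of `Nm⁻(𝔟)` plus an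
algebraic integer. -/
def QS.congMod (S : QS) (b : Ideal (𝓞 S.F)) (x h : S.F) : Prop :=
  ∃ a ∈ S.nmMinus b, ∃ r : 𝓞 S.F, x - h = a + S.toF r

/-- The lattice point set `{λ ∈ Nm⁻(𝔟)𝔡⁻¹ : λ ≡ h in A_Δ, Nm(λ) = m}`. -/
def QS.latticeSet (S : QS) (b : Ideal (𝓞 S.F)) (m : ℝ) (h : S.F) : Set S.F :=
  {x | x ∈ S.nmMinusDual b ∧ S.congMod b x h ∧ S.NmR x = m}

/-- Fundamental domain `1 ≤ |x/x'| < e²` for the action of `Γ_Δ = ⟨ε_Δ⟩`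
(where `e = ε_Δ`), intersected with a set `T`. -/
def QS.fdSet (S : QS) (e : ℝ) (T : Set S.F) : Set S.F :=
  {x ∈ T | 1 ≤ S.rQ x ∧ S.rQ x < e ^ 2}

/-- `c_𝔞(m, h) = Σ_Λ sgn(Λ)`, summed over the (finitely many) `Γ_Δ`-orbits of
`{λ ∈ Nm⁻(𝔟)𝔡⁻¹ : λ ≡ h, Nm(λ) = m}`, each orbit represented by its element in
the fundamental domain `1 ≤ |λ/λ'| < ε_Δ²`.  Here `e = ε_Δ`. -/
def QS.cIdeal (S : QS) (e : ℝ) (b : Ideal (𝓞 S.F)) (m : ℝ) (h : S.F) : ℤ :=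
  ∑ᶠ x ∈ S.fdSet e (S.latticeSet b m h), S.sgn x

/-- `a(Λ)` for an orbit with representative `x` in the fundamental domain:
`sgn(x) log|x/x'|` if `|x/x'| ≠ 1`, and `−log ε_Δ` otherwise (`e = ε_Δ`). -/
def QS.aVal (S : QS) (e : ℝ) (x : S.F) : ℝ :=
  if S.rQ x ≠ 1 then (S.sgn x : ℝ) * Real.log (S.rQ x) else - Real.log e

/-- `tc_𝔞(m, h) = Σ_Λ a(Λ)` over the `Γ_Δ`-orbits as in `QS.cIdeal`. -/
def QS.tcIdeal (S : QS) (e : ℝ) (b : Ideal (𝓞 S.F)) (m : ℝ) (h : S.F) : ℝ :=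
  ∑ᶠ x ∈ S.fdSet e (S.latticeSet b m h), S.aVal e x

/-- Two integral ideals are narrowly equivalent (same class in `Cl⁺(F)`). -/
def QS.narrowEq (S : QS) (a b : Ideal (𝓞 S.F)) : Prop :=
  ∃ α β : 𝓞 S.F, S.Pos (S.toF α) ∧ S.Pos (S.toF β) ∧
    Ideal.span {α} * a = Ideal.span {β} * b

/-- `SF` is a set of integral ideals coprime to `𝔡` representing the classes of
the narrow class group `Cl⁺(F)` exactly once. -/
def QS.IsRepSet (S : QS) (SF : Finset (Ideal (𝓞 S.F))) : Prop :=
  (∀ b ∈ SF, b ≠ ⊥ ∧ IsCoprime b S.dIdeal) ∧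
  ∀ a : Ideal (𝓞 S.F), a ≠ ⊥ → ∃! b, b ∈ SF ∧ S.narrowEq a b

/-- `χ` is a genus character of `F`: a `{±1}`-valued, multiplicative function on
integral ideals, invariant under narrow equivalence, of the form `χ_{Δ₁,Δ₂}`
for a factorization `Δ = Δ₁Δ₂` into coprime fundamental discriminants, i.e.
taking the value `(Δ₁/p)` (Legendre symbol) on degree-one primes `𝔭 ∤ Δ`. -/
def QS.IsGenusChar (S : QS) (χ : Ideal (𝓞 S.F) → ℤ) : Prop :=
  (∀ a b : Ideal (𝓞 S.F), a ≠ ⊥ → b ≠ ⊥ → χ (a * b) = χ a * χ b) ∧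
  (∀ a : Ideal (𝓞 S.F), a ≠ ⊥ → χ a = 1 ∨ χ a = -1) ∧
  (∀ a b : Ideal (𝓞 S.F), a ≠ ⊥ → b ≠ ⊥ → S.narrowEq a b → χ a = χ b) ∧
  (∃ Δ₁ Δ₂ : ℤ, S.Δ = Δ₁ * Δ₂ ∧ IsCoprime Δ₁ Δ₂ ∧
    IsFundamentalDiscriminant Δ₁ ∧ IsFundamentalDiscriminant Δ₂ ∧
    ∀ (p : ℕ) (hp : p.Prime), p ≠ 2 → ¬ ((p : ℤ) ∣ S.Δ) →
      ∀ P : Ideal (𝓞 S.F), Ideal.absNorm P = p → χ P = @legendreSym p ⟨hp⟩ Δ₁)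

/-- `χ` is an odd genus character: `χ([𝔡]) = −1`. -/
def QS.IsOddGenusChar (S : QS) (χ : Ideal (𝓞 S.F) → ℤ) : Prop :=
  S.IsGenusChar χ ∧ χ S.dIdeal = -1

/-- `c_χ(m, h) = Σ_{[𝔟] ∈ Cl⁺(F)} χ([𝔟]) Σ_Λ sgn(Λ)`, the sum over narrow
classes realized by summing over the representative set `SF`; here `λ` runs over
`Γ_Δ`-orbits of `{λ ∈ Nm⁻(𝔟)𝔡⁻¹ : λ ≡ h, Nm(λ) = −m}` (`e = ε_Δ`). -/
def QS.cChi (S : QS) (e : ℝ) (SF : Finset (Ideal (𝓞 S.F)))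
    (χ : Ideal (𝓞 S.F) → ℤ) (m : ℝ) (h : S.F) : ℤ :=
  ∑ b ∈ SF, χ b * S.cIdeal e b (-m) h

/-- `tc_χ(m, h) = (1/2) Σ_{𝔟 ∈ S_F} χ([𝔟]) tc_{Nm⁻(𝔟)}(m, h)`. -/
def QS.tcChi (S : QS) (e : ℝ) (SF : Finset (Ideal (𝓞 S.F)))
    (χ : Ideal (𝓞 S.F) → ℤ) (m : ℝ) (h : S.F) : ℝ :=
  (1 / 2) * ∑ b ∈ SF, (χ b : ℝ) * S.tcIdeal e b m h

/-- `s_h = #{s ∈ {1, ε_F⁺} : s h = h} − #{s ∈ {−1, −ε_F⁺} : s h = h}` in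
`A_Δ = 𝔡⁻¹/𝓞 F`. -/
def QS.shVal (S : QS) (εp : (𝓞 S.F)ˣ) (h : S.F) : ℤ :=
  ((if S.isInt ((1 : S.F) * h - h) then 1 else 0)
      + (if S.isInt (S.toF ↑εp * h - h) then 1 else 0))
    - ((if S.isInt ((-1 : S.F) * h - h) then 1 else 0)
      + (if S.isInt ((-(S.toF ↑εp)) * h - h) then 1 else 0))

/-- `χ(sqrt(𝔞, h))`: the sum of `χ([𝔟])` over those classes `[𝔟] ∈ Cl⁺(F)`
(represented by `SF`) for which `𝔞 = Nm⁻(𝔟)(μ)` for some `μ > 0` with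
`μ/√Δ ∈ 𝔡⁻¹` representing `h ∈ A_Δ`. -/
def QS.chiSqrt (S : QS) (SF : Finset (Ideal (𝓞 S.F))) (χ : Ideal (𝓞 S.F) → ℤ)
    (a : Ideal (𝓞 S.F)) (h : S.F) : ℤ :=
  ∑ b ∈ SF, χ b *
    (if ∃ μ : S.F, 0 < S.ι μ ∧ S.isInt μ ∧ S.isInt (μ / S.sqrtΔ - h) ∧
        {z : S.F | ∃ c ∈ a, S.toF c = z} = {z : S.F | ∃ y ∈ S.nmMinus b, z = μ * y}
      then 1 else 0)

/-- `σ_χ(𝔞) = Σ_{𝔟 ⊇ 𝔞} χ([𝔟])`, the divisor sum of `χ`. -/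
def QS.sigmaChi (S : QS) (χ : Ideal (𝓞 S.F) → ℤ) (a : Ideal (𝓞 S.F)) : ℤ :=
  ∑ᶠ b ∈ {b : Ideal (𝓞 S.F) | a ≤ b}, χ b

/-- `ord_𝔩(J)`, the exponent of the prime `𝔩` in the nonzero integral ideal `J`. -/
def QS.ordI (S : QS) (l J : Ideal (𝓞 S.F)) : ℕ := sSup {k : ℕ | J ≤ l ^ k}

lemma QS.toF_injective (S : QS) : Function.Injective S.toF :=
  IsFractionRing.injective (𝓞 S.F) S.F

lemma QS.int_mem_of_prime (S : QS) (p : ℕ) (hp : p.Prime) (P : Ideal (𝓞 S.F))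
    (hPtop : P ≠ ⊤) (hpP : (p : 𝓞 S.F) ∈ P) {m : ℤ} (hm : (m : 𝓞 S.F) ∈ P) :
    (p : ℤ) ∣ m := by
  by_contra hdvd
  have hcop : IsCoprime (p : ℤ) m :=
    ((Nat.prime_iff_prime_int.mp hp).coprime_iff_not_dvd).mpr hdvd
  obtain ⟨u, v, huv⟩ := hcop
  have h1 : (1 : 𝓞 S.F) ∈ P := by
    have : ((u * p + v * m : ℤ) : 𝓞 S.F) ∈ P := by
      push_cast
      exact Ideal.add_mem P (P.mul_mem_left _ hpP) (P.mul_mem_left _ hm)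
    rw [huv] at this
    exact_mod_cast this
  exact hPtop (Ideal.eq_top_of_isUnit_mem P h1 isUnit_one)

/-- Let `p | Δ` be a prime, `h ∈ A_Δ = 𝔡⁻¹/𝓞 F` (given by a
representative `l ∈ 𝔡⁻¹`), and write `Q(h) = Nm(h) = n/Δ + ℤ`.  Then `h` has a
representative in `𝔡_p 𝔡⁻¹` if and only if `p | n`. -/
theorem mem_ramified_iff_dvd (S : QS) (p : ℕ) (hp : p.Prime) (hpΔ : (p : ℤ) ∣ S.Δ)
    (P : Ideal (𝓞 S.F)) (hP : S.uniquePrimeAbove p P)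
    (l : S.F) (hl : S.inDual l) (n : ℤ)
    (hn : ∃ z : ℤ, S.NmR l * (S.Δ : ℝ) = (n : ℝ) + (S.Δ : ℝ) * (z : ℝ)) :
    (∃ μ : S.F, S.isInt (μ - l) ∧ ∃ c ∈ P, S.toF c = S.sqrtΔ * μ) ↔ (p : ℤ) ∣ n := by
  obtain ⟨hPprime, hPbot, hPtop, hpP, hPuniq⟩ := hP
  obtain ⟨z, hz⟩ := hn
  obtain ⟨a, ha⟩ := hl
  obtain ⟨t, ht⟩ := hpΔ
  -- sΔ ∈ P
  have hsΔsq : S.sΔ * S.sΔ = ((S.Δ : ℤ) : 𝓞 S.F) := by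
    apply S.toF_injective
    show algebraMap (𝓞 S.F) S.F _ = algebraMap (𝓞 S.F) S.F _
    push_cast [map_mul]
    exact S.hsΔ
  have hsΔP : S.sΔ ∈ P := by
    have hsq : S.sΔ * S.sΔ ∈ P := by
      rw [hsΔsq, ht]
      push_cast
      exact P.mul_mem_right _ hpP
    rcases hPprime.mul_mem_iff_mem_or_mem.mp hsq with h | h <;> exact h
  -- σO fixes integers
  have hσO_int : ∀ m : ℤ, S.σO ((m : ℤ) : 𝓞 S.F) = ((m : ℤ) : 𝓞 S.F) := by
    intro m
    apply S.toF_injective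
    show algebraMap (𝓞 S.F) S.F _ = algebraMap (𝓞 S.F) S.F _
    rw [S.hσO]

    simp
  -- key norm identity : a * σO a = -(n + Δ z)
  have hkey : a * S.σO a = ((-(n + S.Δ * z) : ℤ) : 𝓞 S.F) := by
    apply S.toF_injective
    apply S.ι.injective
    show S.ι (algebraMap (𝓞 S.F) S.F (a * S.σO a)) = S.ι (algebraMap (𝓞 S.F) S.F _)
    rw [map_mul, map_mul, S.hσO]
    simp only [QS.sqrtΔ, QS.toF] at ha ⊢
    have ha' : algebraMap (𝓞 S.F) S.F a = algebraMap (𝓞 S.F) S.F S.sΔ * l := ha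
    have hσa : S.σ (algebraMap (𝓞 S.F) S.F a) =
        -(algebraMap (𝓞 S.F) S.F S.sΔ) * S.σ l := by
      rw [ha', map_mul, S.hsΔσ]; try ring
    rw [hσa, ha']
    set w : ℝ := S.ι (algebraMap (𝓞 S.F) S.F S.sΔ) with hw
    have hΔR : w * w = (S.Δ : ℝ) := by
      rw [hw, ← map_mul, S.hsΔ]

      simp
    have hNm : S.NmR l = S.ι l * S.ι (S.σ l) := rfl
    have hval : S.ι (algebraMap (𝓞 S.F) S.F S.sΔ * l) *
        S.ι (-(algebraMap (𝓞 S.F) S.F S.sΔ) * S.σ l) = -((S.Δ : ℝ) * S.NmR l) := by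
      rw [hNm]
      simp only [map_mul, map_neg]
      rw [← hw, ← hΔR]
      ring
    rw [hval]
    have : -((S.Δ : ℝ) * S.NmR l) = -((n : ℝ) + (S.Δ : ℝ) * (z : ℝ)) := by
      rw [mul_comm, hz]
    rw [this]
    push_cast
    simp
  -- a ∈ P ↔ everything
  constructor
  · rintro ⟨μ, ⟨r, hr⟩, c, hcP, hc⟩
    -- a = c - sΔ * r ∈ P
    have haP : a ∈ P := by
      have : S.toF (c - S.sΔ * r) = S.toF a := by
        have e1 : S.toF (c - S.sΔ * r) = S.toF c - S.toF S.sΔ * S.toF r := by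
          simp [QS.toF, map_sub, map_mul]
        rw [e1, hc, hr, ha]
        show S.sqrtΔ * μ - S.sqrtΔ * (μ - l) = S.sqrtΔ * l
        ring
      have heq : c - S.sΔ * r = a := S.toF_injective this
      rw [← heq]
      exact P.sub_mem hcP (P.mul_mem_right _ hsΔP)
    have hmem : ((-(n + S.Δ * z) : ℤ) : 𝓞 S.F) ∈ P := by
      rw [← hkey]; exact P.mul_mem_right _ haP
    have hdvd : (p : ℤ) ∣ -(n + S.Δ * z) :=
      S.int_mem_of_prime p hp P hPtop hpP hmem
    have : (p : ℤ) ∣ n + S.Δ * z := (dvd_neg).mp hdvd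
    have hΔdvd : (p : ℤ) ∣ S.Δ * z := Dvd.dvd.mul_right ⟨t, ht⟩ z
    have := dvd_sub this hΔdvd
    simpa using this
  · intro hpn
    -- a ∈ P since aσa = -(n+Δz) ∈ P and σ(P)=P
    have hNP : ((-(n + S.Δ * z) : ℤ) : 𝓞 S.F) ∈ P := by
      obtain ⟨k, hk⟩ := hpn
      have : (-(n + S.Δ * z) : ℤ) = p * (-(k + t * z)) := by rw [hk, ht]; ring
      rw [this]
      push_cast
      exact P.mul_mem_right _ hpP
    have hprod : a * S.σO a ∈ P := by rw [hkey]; exact hNP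
    have haP : a ∈ P := by
      rcases hPprime.mul_mem_iff_mem_or_mem.mp hprod with h | h
      · exact h
      · -- σO a ∈ P ⇒ a ∈ comap σO P = P
        have hσOp : S.σO ((p : ℕ) : 𝓞 S.F) = ((p : ℕ) : 𝓞 S.F) := by
          have h2 := hσO_int (p : ℤ)
          push_cast at h2
          exact h2
        have hcomap := hPuniq (P.comap S.σO)
        have hQprime : (P.comap S.σO).IsPrime := hPprime.comap S.σO
        have hQp : ((p : ℕ) : 𝓞 S.F) ∈ P.comap S.σO := by
          show S.σO _ ∈ P
          rw [hσOp]
          exact hpP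
        have hQbot : P.comap S.σO ≠ ⊥ := by
          intro hb
          rw [hb] at hQp
          have h0 : ((p : ℕ) : 𝓞 S.F) = 0 := hQp
          have : ((p : ℕ) : S.F) = 0 := by
            have := congrArg S.toF h0
            simpa [QS.toF] using this
          have : (p : ℕ) = 0 := by exact_mod_cast this
          exact hp.ne_zero this
        have hQtop : P.comap S.σO ≠ ⊤ := hQprime.ne_top
        have hQ : P.comap S.σO = P := hcomap hQprime hQbot hQtop hQp
        rw [← hQ]
        exact h
    refine ⟨l, ⟨0, by simp [QS.toF]⟩, a, haP, ha⟩
end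
end

section
/- Let d₀ ∈ G_Δ \ {1} be the unique element such that 𝔡_{d₀} is principal with a totally positive generator, and let ε_F⁺ > 1 be the generator of the group of totally positive units of O_F. Then ε_F⁺ ≡ 1 (mod 𝔡·𝔡_{d₀}⁻¹); ε_F⁺ ≡ −1 (mod 𝔡_p) for every odd prime p | d₀; if 2 | d₀ and ord₂(Δ) = 2 then ε_F⁺ ≡ −1 (mod 𝔡₂); and if 2 | d₀ and ord₂(Δ) = 3 then ε_F⁺ ≡ −1 (mod 𝔡₂³). -/
open NumberField
open scoped nonZeroDivisors

attribute [local instance] Classical.propDecidable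

noncomputable section

/-- The group `G_Δ` of absolute values of fundamental discriminants `e | Δ` with
`gcd(e, Δ/e) = 1`. -/
def GD (Δ : ℤ) : Set ℤ :=
  {d | 0 < d ∧ ∃ e : ℤ, d = |e| ∧ IsFundamentalDiscriminant e ∧ e ∣ Δ ∧ IsCoprime e (Δ / e)}

/-- `𝔡_d = Π_{p | d prime} 𝔡_p`, where `dP p` is the prime of `𝓞 F` above `p`. -/
def QS.dProd (S : QS) (dP : ℕ → Ideal (𝓞 S.F)) (d : ℤ) : Ideal (𝓞 S.F) :=
  ∏ p ∈ d.natAbs.primeFactors, dP p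

/-- An integral ideal is principal with a totally positive generator. -/
def QS.PrincPos (S : QS) (a : Ideal (𝓞 S.F)) : Prop :=
  ∃ γ : 𝓞 S.F, S.Pos (S.toF γ) ∧ a = Ideal.span {γ}

/-!
`𝔡_{d₀} = (γ)` with `γ` totally positive is stable under `σ`, because each `𝔡_p` is the only
prime above `p`. Hence `σγ = uγ` for a totally positive unit `u = ε⁺ⁿ`, and since `σε⁺ = ε⁺⁻¹`,
rescaling `γ` by a power of `ε⁺` achieves `σγ = γ` or `σγ = ε⁺γ`. In the first case `γ` is a
rational integer, so `p ∣ γ` for `p ∣ d₀`, and `𝔡_p² ∣ (p) ∣ 𝔡_{d₀}` contradicts squarefreeness.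
In the second case `(1 - ε⁺)γ = γ - σγ ∈ √Δ ℤ`, which is the congruence modulo `𝔡 𝔡_{d₀}⁻¹`, and
`(1 + ε⁺)γ = Tr γ` is a rational integer in `𝔡_p`, hence in `pℤ ⊆ 𝔡_p²`; cancelling the single
factor `𝔡_p` of `(γ)` leaves `ε⁺ ≡ -1 (mod 𝔡_p)`. If `ord₂ Δ = 3`, then
`(Tr γ)² = 4 Nm γ + r²Δ` (where `γ - σγ = r√Δ`) gives `4 ∣ Tr γ`, whence the congruence mod `𝔡₂³`.
-/

theorem IsFundamentalDiscriminant.not_sq_dvd {Δ : ℤ} (hΔ : IsFundamentalDiscriminant Δ)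
    {p : ℕ} (hp : p.Prime) (hp2 : p ≠ 2) : ¬ (p : ℤ) ^ 2 ∣ Δ := by
  have hp1 : ¬ IsUnit (p : ℤ) := by rw [Int.isUnit_iff]; have := hp.two_le; omega
  rcases hΔ with ⟨-, hsf⟩ | ⟨h4, hsf, -⟩
  · exact fun h => hp1 (hsf _ (by rwa [← pow_two]))
  · intro h
    have hcop : IsCoprime ((p : ℤ) ^ 2) 4 := by
      rw [Int.isCoprime_iff_gcd_eq_one]
      have : Nat.Coprime (p ^ 2) (2 ^ 2) :=
        ((Nat.coprime_primes hp Nat.prime_two).mpr hp2).pow 2 2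
      exact_mod_cast this
    refine hp1 (hsf _ ?_)
    rw [← pow_two]
    exact hcop.dvd_of_dvd_mul_left (by rwa [Int.mul_ediv_cancel' (Int.dvd_of_emod_eq_zero h4)])

theorem IsFundamentalDiscriminant.dvd_of_sq_eq_mul {Δ s t n : ℤ}
    (hΔ : IsFundamentalDiscriminant Δ) (h : s ^ 2 = Δ * (t ^ 2 - 4 * n)) : Δ ∣ s := by
  rcases hΔ with ⟨-, hsf⟩ | ⟨h4, hsf, hm⟩
  · exact (hsf.dvd_pow_iff_dvd two_ne_zero).mp ⟨_, h⟩
  · set m := Δ / 4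
    have hΔm : Δ = 4 * m := by omega
    obtain ⟨s, rfl⟩ : 2 ∣ s :=
      Int.prime_two.dvd_of_dvd_pow (n := 2) ⟨2 * m * (t ^ 2 - 4 * n), by rw [h, hΔm]; ring⟩
    have hs : s ^ 2 = m * (t ^ 2 - 4 * n) :=
      mul_left_cancel₀ four_ne_zero (by rw [hΔm] at h; linear_combination h)
    obtain ⟨u, rfl⟩ : m ∣ s := (hsf.dvd_pow_iff_dvd two_ne_zero).mp ⟨_, hs⟩
    have hu : m * u ^ 2 = t ^ 2 - 4 * n :=
      mul_left_cancel₀ hsf.ne_zero (by linear_combination hs)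
    obtain ⟨v, rfl⟩ : 2 ∣ u := by
      -- an odd `u` would give `m ≡ t² (mod 4)`, but `m ≡ 2, 3` and squares are `0, 1 (mod 4)`
      by_contra hodd
      obtain ⟨v, rfl⟩ : ∃ v, u = 2 * v + 1 := ⟨u / 2, by omega⟩
      obtain ⟨w, rfl | rfl⟩ : ∃ w, t = 2 * w ∨ t = 2 * w + 1 := ⟨t / 2, by omega⟩
      · have : m = 4 * (w ^ 2 - n - m * v ^ 2 - m * v) := by linear_combination hu
        omega
      · have : m = 4 * (w ^ 2 + w - n - m * v ^ 2 - m * v) + 1 := by linear_combination hu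
        omega
    exact ⟨v, by rw [hΔm]; ring⟩

theorem Int.four_dvd_of_eight_dvd_sq {t : ℤ} (h : 8 ∣ t ^ 2) : 4 ∣ t := by
  obtain ⟨k, hk⟩ := h
  obtain ⟨s, rfl⟩ : 2 ∣ t := Int.prime_two.dvd_of_dvd_pow (n := 2) ⟨4 * k, by rw [hk]; ring⟩
  obtain ⟨u, rfl⟩ : 2 ∣ s := Int.prime_two.dvd_of_dvd_pow (n := 2) ⟨k, by linarith⟩
  exact ⟨u, by ring⟩

theorem Ideal.intCast_mem_of_isCoprime {R : Type*} [CommRing R] {I : Ideal R} {x y z : ℤ}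
    (hxy : IsCoprime x y) (hx : ((x * z : ℤ) : R) ∈ I) (hy : ((y * z : ℤ) : R) ∈ I) :
    (z : R) ∈ I := by
  obtain ⟨a, b, hab⟩ := hxy
  have hz : (z : R) = a * ((x * z : ℤ) : R) + b * ((y * z : ℤ) : R) := by
    rw [← Int.cast_mul, ← Int.cast_mul, ← Int.cast_add]
    congr 1
    linear_combination z * hab.symm
  rw [hz]
  exact I.add_mem (I.mul_mem_left _ hx) (I.mul_mem_left _ hy)

theorem Ideal.natCast_dvd_of_intCast_mem {R : Type*} [CommRing R] {I : Ideal R} (hI : I ≠ ⊤)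
    {p : ℕ} (hp : p.Prime) (hpI : (p : R) ∈ I) {n : ℤ} (hn : (n : R) ∈ I) : (p : ℤ) ∣ n := by
  by_contra hpn
  have hcop : IsCoprime (p : ℤ) n :=
    (Nat.prime_iff_prime_int.mp hp).coprime_iff_not_dvd.mpr hpn
  refine hI ((I.eq_top_iff_one).mpr ?_)
  simpa using Ideal.intCast_mem_of_isCoprime (z := 1) hcop (by simpa using hpI) (by simpa using hn)

theorem Ideal.mem_pow_of_mul_mem_pow_succ {R : Type*} [CommRing R] [IsDedekindDomain R]
    {P C : Ideal R} (hP : Prime P) (hC : ¬ P ∣ C) {γ : R} (hγ : Ideal.span {γ} = P * C)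
    {x : R} {j : ℕ} (h : x * γ ∈ P ^ (j + 1)) : x ∈ P ^ j := by
  rw [← Ideal.span_singleton_le_iff_mem, ← Ideal.dvd_iff_le,
    ← Ideal.span_singleton_mul_span_singleton, hγ, pow_succ,
    show Ideal.span {x} * (P * C) = Ideal.span {x} * C * P by ring] at h
  rw [← Ideal.span_singleton_le_iff_mem, ← Ideal.dvd_iff_le]
  exact hP.pow_dvd_of_dvd_mul_right j hC ((mul_dvd_mul_iff_right hP.ne_zero).mp h)

namespace QS

variable (S : QS)

lemma toF_injective_s4 : Function.Injective S.toF := RingOfIntegers.coe_injective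

lemma σO_σO (a : 𝓞 S.F) : S.σO (S.σO a) = a :=
  S.toF_injective_s4 (by simp only [QS.toF, S.hσO, S.hσ])

lemma sΔ_mul_sΔ : S.sΔ * S.sΔ = S.Δ :=
  S.toF_injective_s4 (by simpa [QS.toF] using S.hsΔ)

lemma sΔ_ne_zero : S.sΔ ≠ 0 := by
  intro h
  have h0 : ((S.Δ : ℤ) : 𝓞 S.F) = 0 := by rw [← S.sΔ_mul_sΔ, h, mul_zero]
  have := S.hΔ
  rw [Int.cast_eq_zero] at h0
  omega

lemma exists_rat_eq_of_σ_eq {x : S.F} (hx : S.σ x = x) : ∃ q : ℚ, x = q := by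
  -- otherwise `1, x` is a `ℚ`-basis of `F` fixed by `σ`, but `σ √Δ = -√Δ ≠ √Δ`
  by_contra! hx_irr
  have hli : LinearIndependent ℚ ![1, x] := by
    refine LinearIndependent.pair_iff.mpr fun a b hab => ?_
    by_cases hb : b = 0
    · subst hb
      simpa using hab
    · refine absurd ?_ (hx_irr (-a / b))
      rw [Rat.smul_def, Rat.smul_def, mul_one] at hab
      push_cast
      field_simp
      linear_combination hab
  have hspan := hli.span_eq_top_of_card_eq_finrank (by simp [S.hdeg])
  obtain ⟨c, hc⟩ := (Submodule.mem_span_range_iff_exists_fun ℚ).mp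
    (hspan ▸ Submodule.mem_top : S.sqrtΔ ∈ Submodule.span ℚ (Set.range ![1, x]))
  simp only [Fin.sum_univ_two, Matrix.cons_val_zero, Matrix.cons_val_one, Rat.smul_def,
    mul_one] at hc
  have hfix : S.σ S.sqrtΔ = S.sqrtΔ := by
    rw [← hc, map_add, map_mul, map_ratCast, map_ratCast, hx]
  have hne : S.sqrtΔ ≠ 0 := fun h => S.sΔ_ne_zero (S.toF_injective_s4 (h.trans (map_zero _).symm))
  rw [QS.sqrtΔ, QS.toF, S.hsΔσ, neg_eq_iff_add_eq_zero, ← two_mul] at hfix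
  exact hne (by simpa [QS.sqrtΔ, QS.toF] using hfix)

lemma exists_int_eq_of_σO_eq {a : 𝓞 S.F} (ha : S.σO a = a) : ∃ n : ℤ, a = n := by
  obtain ⟨q, hq⟩ := S.exists_rat_eq_of_σ_eq (x := S.toF a) (by rw [QS.toF, ← S.hσO, ha])
  have hint : IsIntegral ℤ q := by
    have h1 : IsIntegral ℤ (q : S.F) := hq ▸ RingOfIntegers.isIntegral_coe a
    rw [← eq_ratCast (algebraMap ℚ S.F) q] at h1
    exact (isIntegral_algebraMap_iff (algebraMap ℚ S.F).injective).mp h1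
  obtain ⟨n, hn⟩ := IsIntegrallyClosed.isIntegral_iff.mp hint
  refine ⟨n, S.toF_injective_s4 ?_⟩
  rw [hq, ← hn]
  simp [QS.toF]

lemma exists_int_eq_add_σO (a : 𝓞 S.F) : ∃ t : ℤ, a + S.σO a = t :=
  S.exists_int_eq_of_σO_eq (by rw [map_add, S.σO_σO, add_comm])

lemma exists_int_eq_mul_σO (a : 𝓞 S.F) : ∃ n : ℤ, a * S.σO a = n :=
  S.exists_int_eq_of_σO_eq (by rw [map_mul, S.σO_σO, mul_comm])

lemma σO_sΔ : S.σO S.sΔ = -S.sΔ :=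
  S.toF_injective_s4 (by simp only [QS.toF, S.hσO, S.hsΔσ, map_neg])

lemma exists_int_sub_σO_eq_mul_sΔ (a : 𝓞 S.F) : ∃ r : ℤ, a - S.σO a = r * S.sΔ := by
  obtain ⟨t, ht⟩ := S.exists_int_eq_add_σO a
  obtain ⟨n, hn⟩ := S.exists_int_eq_mul_σO a
  obtain ⟨s, hs⟩ := S.exists_int_eq_of_σO_eq (a := (a - S.σO a) * S.sΔ)
    (by rw [map_mul, map_sub, S.σO_σO, S.σO_sΔ]; ring)
  have hsq : s ^ 2 = S.Δ * (t ^ 2 - 4 * n) := by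
    apply Int.cast_injective (α := 𝓞 S.F)
    push_cast
    rw [← hs, ← ht, ← hn, ← S.sΔ_mul_sΔ]
    ring
  obtain ⟨r, rfl⟩ := S.hfund.dvd_of_sq_eq_mul hsq
  refine ⟨r, mul_right_cancel₀ S.sΔ_ne_zero ?_⟩
  rw [hs, mul_assoc, S.sΔ_mul_sΔ]
  push_cast
  ring

variable {S}

lemma σO_eq_inv_of_pos {ε : (𝓞 S.F)ˣ} (hε : S.Pos (S.toF ε)) : S.σO ε = ↑ε⁻¹ := by
  obtain ⟨n, hn⟩ := S.exists_int_eq_mul_σO ε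
  obtain ⟨m, hm⟩ := S.exists_int_eq_mul_σO ↑ε⁻¹
  have hnm : n * m = 1 := by
    apply Int.cast_injective (α := 𝓞 S.F)
    rw [Int.cast_mul, ← hn, ← hm, Int.cast_one]
    calc (ε : 𝓞 S.F) * S.σO ε * (↑ε⁻¹ * S.σO ↑ε⁻¹)
        = S.σO (ε * ↑ε⁻¹) * (ε * ↑ε⁻¹) := by rw [map_mul]; ring
      _ = 1 := by simp
  have hpos : (0 : ℝ) < n := by
    have : S.ι (S.toF ε) * S.ι (S.σ (S.toF ε)) = n := by
      rw [QS.toF, ← S.hσO, ← map_mul, ← map_mul, hn]; simp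
    exact this ▸ mul_pos hε.1 hε.2
  obtain rfl : n = 1 := by
    rcases Int.isUnit_iff.mp (IsUnit.of_mul_eq_one m hnm) with h | h
    · exact h
    · rw [h] at hpos; norm_num at hpos
  exact mul_left_cancel₀ ε.ne_zero (by rw [hn, Int.cast_one, Units.mul_inv])

lemma σO_zpow_of_pos {ε : (𝓞 S.F)ˣ} (hε : S.Pos (S.toF ε)) (k : ℤ) :
    S.σO ↑(ε ^ k) = ↑(ε ^ (-k)) := by
  have hmap : Units.map S.σO.toMonoidHom ε = ε⁻¹ := Units.ext (σO_eq_inv_of_pos hε)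
  rw [zpow_neg, ← inv_zpow, ← hmap, ← map_zpow]
  rfl

lemma pos_of_σO_eq_mul {γ u : 𝓞 S.F} (hγ : S.Pos (S.toF γ)) (hu : S.σO γ = u * γ) :
    S.Pos (S.toF u) := by
  have hF : S.σ (S.toF γ) = S.toF u * S.toF γ := by
    rw [QS.toF, QS.toF, ← S.hσO, hu, map_mul]
  have hF' : S.toF γ = S.σ (S.toF u) * S.σ (S.toF γ) := by
    rw [← map_mul, ← hF, S.hσ]
  constructor
  · refine pos_of_mul_pos_left (b := S.ι (S.toF γ)) ?_ hγ.1.le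
    rw [← map_mul, ← hF]; exact hγ.2
  · refine pos_of_mul_pos_left (b := S.ι (S.σ (S.toF γ))) ?_ hγ.2.le
    rw [← map_mul, ← hF']; exact hγ.1

lemma exists_span_eq_and_σO_eq {ε : (𝓞 S.F)ˣ} (hε : S.Pos (S.toF ε))
    (hgen : ∀ u : (𝓞 S.F)ˣ, S.Pos (S.toF u) → ∃ n : ℤ, u = ε ^ n)
    {γ : 𝓞 S.F} (hγ : S.Pos (S.toF γ)) (hσ : Ideal.map S.σO (Ideal.span {γ}) = Ideal.span {γ}) :
    ∃ δ : 𝓞 S.F, Ideal.span {δ} = Ideal.span {γ} ∧ (S.σO δ = δ ∨ S.σO δ = ε * δ) := by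
  rw [Ideal.map_span, Set.image_singleton, Ideal.span_singleton_eq_span_singleton] at hσ
  obtain ⟨u, hu⟩ := hσ.symm
  obtain ⟨n, rfl⟩ := hgen u (pos_of_σO_eq_mul hγ (by rw [← hu, mul_comm]))
  have hscale : ∀ k : ℤ, S.σO (↑(ε ^ k) * γ) = ↑(ε ^ (n - 2 * k)) * (↑(ε ^ k) * γ) := by
    intro k
    rw [map_mul, σO_zpow_of_pos hε, ← hu, mul_comm γ, ← mul_assoc, ← mul_assoc,
      ← Units.val_mul, ← Units.val_mul, ← zpow_add, ← zpow_add]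
    ring_nf
  have hspan : ∀ k : ℤ, Ideal.span {↑(ε ^ k) * γ} = Ideal.span {γ} := fun k =>
    Ideal.span_singleton_mul_left_unit (Units.isUnit _) γ
  obtain ⟨k, rfl | rfl⟩ := Int.even_or_odd' n
  · exact ⟨_, hspan k, Or.inl (by simpa using hscale k)⟩
  · exact ⟨_, hspan k, Or.inr (by simpa using hscale k)⟩

variable {P : Ideal (𝓞 S.F)} {p : ℕ}

lemma uniquePrimeAbove.comap_σO (hp : p.Prime) (hP : S.uniquePrimeAbove p P) :
    Ideal.comap S.σO P = P := by
  have hPprime := hP.1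
  have hpP : (p : 𝓞 S.F) ∈ Ideal.comap S.σO P := by
    rw [Ideal.mem_comap, map_natCast]; exact hP.2.2.2.1
  refine hP.2.2.2.2 _ (Ideal.IsPrime.comap S.σO) (fun h => ?_)
    (Ideal.IsPrime.comap S.σO).ne_top hpP
  rw [h, Ideal.mem_bot, Nat.cast_eq_zero] at hpP
  exact hp.ne_zero hpP

lemma uniquePrimeAbove.map_σO (hp : p.Prime) (hP : S.uniquePrimeAbove p P) :
    Ideal.map S.σO P = P := by
  conv_lhs => rw [← hP.comap_σO hp]
  exact Ideal.map_comap_of_surjective _ (fun a => ⟨S.σO a, S.σO_σO a⟩) P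

lemma uniquePrimeAbove.ne {q : ℕ} (hp : p.Prime) (hq : q.Prime) (hpq : p ≠ q)
    {Q : Ideal (𝓞 S.F)} (hP : S.uniquePrimeAbove p P) (hQ : S.uniquePrimeAbove q Q) :
    P ≠ Q := by
  rintro rfl
  have hdvd := Ideal.natCast_dvd_of_intCast_mem hP.2.2.1 hp hP.2.2.2.1
    (n := q) (by exact_mod_cast hQ.2.2.2.1)
  exact hpq ((Nat.prime_dvd_prime_iff_eq hp hq).mp (Int.natCast_dvd_natCast.mp hdvd))

lemma sΔ_mem (hP : P.IsPrime) (hpΔ : (p : ℤ) ∣ S.Δ) (hpP : (p : 𝓞 S.F) ∈ P) : S.sΔ ∈ P := by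
  obtain ⟨c, hc⟩ := hpΔ
  refine hP.mem_of_pow_mem 2 ?_
  rw [pow_two, S.sΔ_mul_sΔ, hc, Int.cast_mul, Int.cast_natCast]
  exact P.mul_mem_right _ hpP

lemma exists_mul_self_eq_div_four (h4 : 4 ∣ S.Δ) :
    ∃ μ : 𝓞 S.F, μ * μ = ((S.Δ / 4 : ℤ) : 𝓞 S.F) := by
  have hsq : (S.sqrtΔ / 2) ^ 2 = ((S.Δ / 4 : ℤ) : S.F) := by
    rw [div_pow, pow_two, QS.sqrtΔ, QS.toF, S.hsΔ]
    obtain ⟨m, hm⟩ := h4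
    rw [hm, Int.mul_ediv_cancel_left _ four_ne_zero]
    push_cast
    ring
  have hint : IsIntegral ℤ (S.sqrtΔ / 2) := by
    refine ⟨Polynomial.X ^ 2 - Polynomial.C (S.Δ / 4),
      Polynomial.monic_X_pow_sub_C _ two_ne_zero, ?_⟩
    simp only [Polynomial.eval₂_sub, Polynomial.eval₂_X_pow, Polynomial.eval₂_C, hsq]
    simp
  refine ⟨(⟨S.sqrtΔ / 2, hint⟩ : 𝓞 S.F), S.toF_injective_s4 ?_⟩
  exact ((pow_two _).symm.trans hsq).trans (map_intCast (algebraMap (𝓞 S.F) S.F) _).symm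

lemma natCast_mem_sq_of_ne_two (hP : P.IsPrime) (hp : p.Prime) (hp2 : p ≠ 2)
    (hpΔ : (p : ℤ) ∣ S.Δ) (hpP : (p : 𝓞 S.F) ∈ P) : (p : 𝓞 S.F) ∈ P ^ 2 := by
  obtain ⟨c, hc⟩ := hpΔ
  have hpc : IsCoprime (p : ℤ) c := (Nat.prime_iff_prime_int.mp hp).coprime_iff_not_dvd.mpr
    fun ⟨d, hd⟩ => S.hfund.not_sq_dvd hp hp2 ⟨d, by rw [hc, hd]; ring⟩
  have hsΔ := sΔ_mem hP ⟨c, hc⟩ hpP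
  have := Ideal.intCast_mem_of_isCoprime (I := P ^ 2) (z := p) hpc
    (by rw [Int.cast_mul, Int.cast_natCast, pow_two]; exact Ideal.mul_mem_mul hpP hpP)
    (by rw [mul_comm, ← hc, ← S.sΔ_mul_sΔ, pow_two]; exact Ideal.mul_mem_mul hsΔ hsΔ)
  exact_mod_cast this

lemma two_mem_sq (hP : P.IsPrime) (h2Δ : (2 : ℤ) ∣ S.Δ) (h2P : (2 : 𝓞 S.F) ∈ P) :
    (2 : 𝓞 S.F) ∈ P ^ 2 := by
  have hmul : ∀ {x y : 𝓞 S.F}, x ∈ P → y ∈ P → x * y ∈ P ^ 2 := fun hx hy =>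
    pow_two P ▸ Ideal.mul_mem_mul hx hy
  have h4 : S.Δ % 4 = 0 ∧ (S.Δ / 4 % 4 = 2 ∨ S.Δ / 4 % 4 = 3) := by
    rcases S.hfund with ⟨h1, -⟩ | ⟨h0, -, hm⟩
    · omega
    · exact ⟨h0, hm⟩
  obtain ⟨μ, hμ⟩ := exists_mul_self_eq_div_four (S := S) (Int.dvd_of_emod_eq_zero h4.1)
  set m := S.Δ / 4
  -- in both cases `2 = 2·2·a + 2·w·b` with `w` odd and `2·w` a product of two elements of `P`
  rcases h4.2 with hm | hm
  · obtain ⟨w, hw⟩ : ∃ w, m = 2 * w := ⟨m / 2, by omega⟩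
    have hμP : μ ∈ P := hP.mem_of_pow_mem 2 (by
      rw [pow_two, hμ, hw, Int.cast_mul, Int.cast_ofNat]; exact P.mul_mem_right _ h2P)
    have := Ideal.intCast_mem_of_isCoprime (I := P ^ 2) (z := 2) (y := w)
      (Int.prime_two.coprime_iff_not_dvd.mpr (by omega))
      (by rw [Int.cast_mul, Int.cast_ofNat]; exact hmul h2P h2P)
      (by rw [mul_comm, ← hw, ← hμ]; exact hmul hμP hμP)
    exact_mod_cast this
  · obtain ⟨k, hk⟩ : ∃ k, m = 2 * k - 1 := ⟨(m + 1) / 2, by omega⟩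
    have hmk : (m : 𝓞 S.F) = 2 * k - 1 := by rw [hk]; push_cast; ring
    have h1μ : 1 + μ ∈ P := hP.mem_of_pow_mem 2 (by
      rw [show (1 + μ) ^ 2 = 2 * (k + μ) by linear_combination hμ + hmk]
      exact P.mul_mem_right _ h2P)
    have h1μ' : 1 - μ ∈ P := hP.mem_of_pow_mem 2 (by
      rw [show (1 - μ) ^ 2 = 2 * (k - μ) by linear_combination hμ + hmk]
      exact P.mul_mem_right _ h2P)
    have := Ideal.intCast_mem_of_isCoprime (I := P ^ 2) (z := 2) (y := 1 - k)
      (Int.prime_two.coprime_iff_not_dvd.mpr (by omega))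
      (by rw [Int.cast_mul, Int.cast_ofNat]; exact hmul h2P h2P)
      (by
        rw [show ((1 - k) * 2 : ℤ) = 1 - m by omega, Int.cast_sub, Int.cast_one, ← hμ,
          show (1 : 𝓞 S.F) - μ * μ = (1 + μ) * (1 - μ) by ring]
        exact hmul h1μ h1μ')
    exact_mod_cast this

lemma natCast_mem_sq (hP : P.IsPrime) (hp : p.Prime) (hpΔ : (p : ℤ) ∣ S.Δ)
    (hpP : (p : 𝓞 S.F) ∈ P) : (p : 𝓞 S.F) ∈ P ^ 2 := by
  by_cases hp2 : p = 2
  · subst hp2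
    exact_mod_cast two_mem_sq hP hpΔ (by exact_mod_cast hpP)
  · exact natCast_mem_sq_of_ne_two hP hp hp2 hpΔ hpP

lemma intCast_mem_sq_of_mem (hP : P.IsPrime) (hp : p.Prime) (hpΔ : (p : ℤ) ∣ S.Δ)
    (hpP : (p : 𝓞 S.F) ∈ P) {c : ℤ} (hc : (c : 𝓞 S.F) ∈ P) : (c : 𝓞 S.F) ∈ P ^ 2 := by
  obtain ⟨c, rfl⟩ := Ideal.natCast_dvd_of_intCast_mem hP.ne_top hp hpP hc
  rw [Int.cast_mul, Int.cast_natCast]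
  exact (P ^ 2).mul_mem_right _ (natCast_mem_sq hP hp hpΔ hpP)

lemma prime_of_natCast_mem (hP : P.IsPrime) (hp : p.Prime) (hpP : (p : 𝓞 S.F) ∈ P) : Prime P :=
  Ideal.prime_of_isPrime (fun h => hp.ne_zero (by simpa [h] using hpP)) hP

variable {ε δ : 𝓞 S.F} {C : Ideal (𝓞 S.F)}

lemma sub_one_mul_mem_dIdeal (hσ : S.σO δ = ε * δ) {x : 𝓞 S.F} (hx : x ∈ Ideal.span {δ}) :
    (ε - 1) * x ∈ S.dIdeal := by
  obtain ⟨a, rfl⟩ := Ideal.mem_span_singleton'.mp hx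
  obtain ⟨r, hr⟩ := S.exists_int_sub_σO_eq_mul_sΔ δ
  refine Ideal.mem_span_singleton'.mpr ⟨-(a * r), ?_⟩
  linear_combination a * hr + a * hσ

lemma add_one_mem_of_σO_eq_mul (hσ : S.σO δ = ε * δ) (hP : P.IsPrime) (hp : p.Prime)
    (hpΔ : (p : ℤ) ∣ S.Δ) (hpP : (p : 𝓞 S.F) ∈ P) (hC : ¬ P ∣ C)
    (hδ : Ideal.span {δ} = P * C) : ε + 1 ∈ P := by
  have hδP : δ ∈ P := Ideal.mul_le_left (by rw [← hδ]; exact Ideal.mem_span_singleton_self δ)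
  obtain ⟨t, ht⟩ := S.exists_int_eq_add_σO δ
  have htP : (t : 𝓞 S.F) ∈ P := ht ▸ P.add_mem hδP (hσ ▸ P.mul_mem_left ε hδP)
  have hmem : (ε + 1) * δ ∈ P ^ (1 + 1) := by
    rw [show (ε + 1) * δ = t by rw [← ht, hσ]; ring]
    exact intCast_mem_sq_of_mem hP hp hpΔ hpP htP
  simpa using Ideal.mem_pow_of_mul_mem_pow_succ (prime_of_natCast_mem hP hp hpP) hC hδ hmem

lemma add_one_mem_pow_three_of_σO_eq_mul (hσ : S.σO δ = ε * δ) (hP : P.IsPrime)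
    (h8 : 8 ∣ S.Δ) (h2P : (2 : 𝓞 S.F) ∈ P) (hC : ¬ P ∣ C)
    (hδ : Ideal.span {δ} = P * C) : ε + 1 ∈ P ^ 3 := by
  have hδP : δ ∈ P := Ideal.mul_le_left (by rw [← hδ]; exact Ideal.mem_span_singleton_self δ)
  obtain ⟨t, ht⟩ := S.exists_int_eq_add_σO δ
  obtain ⟨n, hn⟩ := S.exists_int_eq_mul_σO δ
  obtain ⟨r, hr⟩ := S.exists_int_sub_σO_eq_mul_sΔ δ
  have hid : t ^ 2 = 4 * n + r ^ 2 * S.Δ := by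
    apply Int.cast_injective (α := 𝓞 S.F)
    push_cast
    rw [← ht, ← hn, ← S.sΔ_mul_sΔ]
    linear_combination (δ - S.σO δ + r * S.sΔ) * hr
  have h2n : (2 : ℤ) ∣ n := Ideal.natCast_dvd_of_intCast_mem hP.ne_top Nat.prime_two
    (by exact_mod_cast h2P) (hn ▸ P.mul_mem_right _ hδP)
  obtain ⟨t, rfl⟩ := Int.four_dvd_of_eight_dvd_sq (hid ▸ dvd_add (mul_dvd_mul_left 4 h2n)
    (dvd_mul_of_dvd_right h8 _))
  have h2P2 : (2 : 𝓞 S.F) ∈ P ^ 2 := two_mem_sq hP (dvd_trans ⟨4, rfl⟩ h8) h2P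
  have hmem : (ε + 1) * δ ∈ P ^ (3 + 1) := by
    rw [show (ε + 1) * δ = 2 * 2 * t by push_cast at ht; linear_combination ht - hσ,
      show P ^ (3 + 1) = P ^ 2 * P ^ 2 by ring]
    exact Ideal.mul_mem_right _ _ (Ideal.mul_mem_mul h2P2 h2P2)
  exact Ideal.mem_pow_of_mul_mem_pow_succ
    (prime_of_natCast_mem (p := 2) hP Nat.prime_two (by exact_mod_cast h2P)) hC hδ hmem

variable {dP : ℕ → Ideal (𝓞 S.F)} {d : ℤ}

lemma map_σO_dProd (hdP : ∀ p ∈ d.natAbs.primeFactors, S.uniquePrimeAbove p (dP p)) :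
    Ideal.map S.σO (S.dProd dP d) = S.dProd dP d := by
  have hmap := map_prod (Ideal.mapHom S.σO) dP d.natAbs.primeFactors
  simp only [Ideal.mapHom_apply] at hmap
  rw [QS.dProd, hmap]
  exact Finset.prod_congr rfl fun p hp => (hdP p hp).map_σO (Nat.prime_of_mem_primeFactors hp)

lemma exists_dProd_eq_mul (hdP : ∀ p ∈ d.natAbs.primeFactors, S.uniquePrimeAbove p (dP p))
    (hp : p ∈ d.natAbs.primeFactors) : ∃ C, S.dProd dP d = dP p * C ∧ ¬ dP p ∣ C := by
  refine ⟨∏ q ∈ d.natAbs.primeFactors.erase p, dP q, (Finset.mul_prod_erase _ _ hp).symm,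
    fun hdvd => ?_⟩
  obtain ⟨q, hq, hle⟩ := ((hdP p hp).1.prod_le).mp (Ideal.dvd_iff_le.mp hdvd)
  have hq' := Finset.mem_of_mem_erase hq
  exact (hdP q hq').ne (Nat.prime_of_mem_primeFactors hq') (Nat.prime_of_mem_primeFactors hp)
    (Finset.ne_of_mem_erase hq) (hdP p hp)
    (((hdP q hq').1.isMaximal (hdP q hq').2.1).eq_of_le (hdP p hp).2.2.1 hle)

lemma span_intCast_ne_dProd (hdP : ∀ p ∈ d.natAbs.primeFactors, S.uniquePrimeAbove p (dP p))
    (hdΔ : d ∣ S.Δ) (hp : p ∈ d.natAbs.primeFactors) (c : ℤ) :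
    Ideal.span {(c : 𝓞 S.F)} ≠ S.dProd dP d := by
  intro hc
  obtain ⟨C, hC, hPC⟩ := exists_dProd_eq_mul hdP hp
  have hpΔ : (p : ℤ) ∣ S.Δ := (Int.natCast_dvd.mpr (Nat.dvd_of_mem_primeFactors hp)).trans hdΔ
  have hP := hdP p hp
  have hp' := Nat.prime_of_mem_primeFactors hp
  have hcP : (c : 𝓞 S.F) ∈ dP p :=
    Ideal.mul_le_left (by rw [← hC, ← hc]; exact Ideal.mem_span_singleton_self _)
  -- `c ∈ 𝔡_p` forces `𝔡_p² ∣ (c)`, but `𝔡_p` divides `𝔡_d` only once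
  have hcP2 := intCast_mem_sq_of_mem hP.1 hp' hpΔ hP.2.2.2.1 hcP
  have h1 : (1 : 𝓞 S.F) ∈ dP p ^ 1 := Ideal.mem_pow_of_mul_mem_pow_succ
    (prime_of_natCast_mem hP.1 hp' hP.2.2.2.1) hPC (hc.trans hC) (by simpa using hcP2)
  exact hP.2.2.1 ((Ideal.eq_top_iff_one _).mpr (by simpa using h1))

lemma add_one_mem_of_span_eq_dProd
    (hdP : ∀ p ∈ d.natAbs.primeFactors, S.uniquePrimeAbove p (dP p))
    (hdΔ : d ∣ S.Δ) (hp : p ∈ d.natAbs.primeFactors) (hδ : Ideal.span {δ} = S.dProd dP d)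
    (hσ : S.σO δ = ε * δ) : ε + 1 ∈ dP p := by
  obtain ⟨C, hC, hPC⟩ := exists_dProd_eq_mul hdP hp
  exact add_one_mem_of_σO_eq_mul hσ (hdP p hp).1 (Nat.prime_of_mem_primeFactors hp)
    ((Int.natCast_dvd.mpr (Nat.dvd_of_mem_primeFactors hp)).trans hdΔ) (hdP p hp).2.2.2.1 hPC
    (hδ.trans hC)

lemma add_one_mem_pow_three_of_span_eq_dProd
    (hdP : ∀ p ∈ d.natAbs.primeFactors, S.uniquePrimeAbove p (dP p))
    (h2 : 2 ∈ d.natAbs.primeFactors) (h8 : 8 ∣ S.Δ) (hδ : Ideal.span {δ} = S.dProd dP d)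
    (hσ : S.σO δ = ε * δ) : ε + 1 ∈ dP 2 ^ 3 := by
  obtain ⟨C, hC, hPC⟩ := exists_dProd_eq_mul hdP h2
  exact add_one_mem_pow_three_of_σO_eq_mul hσ (hdP 2 h2).1 h8
    (by exact_mod_cast (hdP 2 h2).2.2.2.1) hPC (hδ.trans hC)

end QS

theorem eps_congruences_general (S : QS) (dP : ℕ → Ideal (𝓞 S.F))
    (hdP : ∀ p : ℕ, p.Prime → (p : ℤ) ∣ S.Δ → S.uniquePrimeAbove p (dP p))
    (d₀ : ℤ) (hd₀ : d₀ ∈ GD S.Δ) (hd₀1 : d₀ ≠ 1)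
    (hd₀princ : S.PrincPos (S.dProd dP d₀))
    (εp : (𝓞 S.F)ˣ) (hεppos : S.Pos (S.toF ↑εp))
    (hεpgen : ∀ u : (𝓞 S.F)ˣ, S.Pos (S.toF ↑u) → ∃ n : ℤ, u = εp ^ n) :
    (∀ x ∈ S.dProd dP d₀, ((εp : 𝓞 S.F) - 1) * x ∈ S.dIdeal) ∧
    (∀ p : ℕ, p.Prime → p ≠ 2 → (p : ℤ) ∣ d₀ → ((εp : 𝓞 S.F) + 1) ∈ dP p) ∧
    ((2 : ℤ) ∣ d₀ → (4 ∣ S.Δ ∧ ¬ (8 ∣ S.Δ)) → ((εp : 𝓞 S.F) + 1) ∈ dP 2) ∧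
    ((2 : ℤ) ∣ d₀ → (8 ∣ S.Δ ∧ ¬ (16 ∣ S.Δ)) → ((εp : 𝓞 S.F) + 1) ∈ (dP 2) ^ 3) := by
  have hd₀pos := hd₀.1
  have hd₀Δ : d₀ ∣ S.Δ := by
    obtain ⟨-, e, rfl, -, he, -⟩ := hd₀
    exact (abs_dvd e S.Δ).mpr he
  have hfac : ∀ {p : ℕ}, p.Prime → (p : ℤ) ∣ d₀ → p ∈ d₀.natAbs.primeFactors := fun hp hpd =>
    Nat.mem_primeFactors.mpr ⟨hp, Int.natCast_dvd.mp hpd, by omega⟩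
  have hup : ∀ p ∈ d₀.natAbs.primeFactors, S.uniquePrimeAbove p (dP p) := fun p hp =>
    hdP p (Nat.prime_of_mem_primeFactors hp)
      ((Int.natCast_dvd.mpr (Nat.dvd_of_mem_primeFactors hp)).trans hd₀Δ)
  obtain ⟨γ, hγpos, hγ⟩ := hd₀princ
  obtain ⟨δ, hδ, hσδ | hσδ⟩ :=
    QS.exists_span_eq_and_σO_eq hεppos hεpgen hγpos (hγ ▸ QS.map_σO_dProd hup)
  · obtain ⟨c, rfl⟩ := S.exists_int_eq_of_σO_eq hσδ
    have hd₀ne : d₀.natAbs ≠ 1 := by omega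
    exact absurd (hδ.trans hγ.symm) (QS.span_intCast_ne_dProd hup hd₀Δ
      (hfac (Nat.minFac_prime hd₀ne) (Int.natCast_dvd.mpr (Nat.minFac_dvd _))) c)
  · rw [← hγ] at hδ
    refine ⟨fun x hx => QS.sub_one_mul_mem_dIdeal hσδ (hδ ▸ hx),
      fun p hp _ hpd => QS.add_one_mem_of_span_eq_dProd hup hd₀Δ (hfac hp hpd) hδ hσδ,
      fun h2 _ => QS.add_one_mem_of_span_eq_dProd hup hd₀Δ (hfac Nat.prime_two h2) hδ hσδ,
      fun h2 h8 =>
        QS.add_one_mem_pow_three_of_span_eq_dProd hup (hfac Nat.prime_two h2) h8.1 hδ hσδ⟩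

/-- Let `d₀ ∈ G_Δ \ {1}` be the unique element with `𝔡_{d₀}`
principal with totally positive generator, and `ε_F⁺ > 1` the generator of the
totally positive units.  Then `ε_F⁺ ≡ 1 (mod 𝔡 𝔡_{d₀}⁻¹)` (i.e.
`(ε_F⁺ − 1)𝔡_{d₀} ⊆ 𝔡`); `ε_F⁺ ≡ −1 (mod 𝔡_p)` for every odd prime `p | d₀`;
if `2 | d₀` and `ord₂(Δ) = 2` then `ε_F⁺ ≡ −1 (mod 𝔡₂)`; and if `2 | d₀` and
`ord₂(Δ) = 3` then `ε_F⁺ ≡ −1 (mod 𝔡₂³)`. -/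
theorem eps_congruences (S : QS) (dP : ℕ → Ideal (𝓞 S.F))
    (hdP : ∀ p : ℕ, p.Prime → (p : ℤ) ∣ S.Δ → S.uniquePrimeAbove p (dP p))
    (d₀ : ℤ) (hd₀ : d₀ ∈ GD S.Δ) (hd₀1 : d₀ ≠ 1)
    (hd₀princ : S.PrincPos (S.dProd dP d₀))
    (εp : (𝓞 S.F)ˣ) (hεppos : S.Pos (S.toF ↑εp)) (hεpgt : 1 < S.ι (S.toF ↑εp))
    (hεpgen : ∀ u : (𝓞 S.F)ˣ, S.Pos (S.toF ↑u) → ∃ n : ℤ, u = εp ^ n) :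
    (∀ x ∈ S.dProd dP d₀, ((εp : 𝓞 S.F) - 1) * x ∈ S.dIdeal) ∧
    (∀ p : ℕ, p.Prime → p ≠ 2 → (p : ℤ) ∣ d₀ → ((εp : 𝓞 S.F) + 1) ∈ dP p) ∧
    ((2 : ℤ) ∣ d₀ → (4 ∣ S.Δ ∧ ¬ (8 ∣ S.Δ)) → ((εp : 𝓞 S.F) + 1) ∈ dP 2) ∧
    ((2 : ℤ) ∣ d₀ → (8 ∣ S.Δ ∧ ¬ (16 ∣ S.Δ)) → ((εp : 𝓞 S.F) + 1) ∈ (dP 2) ^ 3) :=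
  eps_congruences_general S dP hdP d₀ hd₀ hd₀1 hd₀princ εp hεppos hεpgen
end
end

section
/- For ε ∈ {1, −1} and integers 0 ≤ a ≤ b, the double sum Σ_{s=0}^{a} Σ_{r=s−a}^{b−s} ε^r·(a − b + 2r) equals: a+1 if ε = −1, a is odd and b is even; −(b+1) if ε = −1, a is even and b is odd; and 0 in all other cases (in particular whenever ε = 1 or a ≡ b mod 2). -/
/-!
Substituting `r = s - a + k` turns the inner sum into `-ε ^ (a + s)` times
`∑_{k=0}^{M} ε ^ k (M - 2k)` with `M = a + b - 2s`. For `ε = 1` this sum vanishes; for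
`ε = -1` it is an alternating sum of an arithmetic progression, which is `0` or `M + 1` according
to the parity of `M ≡ a + b`. When `a + b` is odd, the outer sum is again such an alternating
sum, and its value depends on the parity of `a`.
-/

open Finset

theorem Finset.sum_Icc_add_natCast_eq_sum_range {M : Type*} [AddCommMonoid M] (f : ℤ → M) (m : ℤ)
    (n : ℕ) :
    ∑ r ∈ Icc m (m + n), f r = ∑ k ∈ range (n + 1), f (m + k) :=
  sum_nbij' (fun r ↦ (r - m).toNat) (fun k ↦ m + k) (by simp; omega) (by simp)
    (by simp; omega) (by simp) (fun r hr ↦ by simp at hr; congr; omega)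

theorem sum_range_sub_two_mul (c : ℤ) (m : ℕ) :
    ∑ k ∈ range (m + 1), (c - 2 * k) = (m + 1) * (c - m) := by
  induction m with
  | zero => simp
  | succ n ih => rw [sum_range_succ, ih]; push_cast; ring

theorem sum_range_neg_one_pow_mul_sub_two_mul (c : ℤ) (m : ℕ) :
    ∑ k ∈ range (m + 1), (-1) ^ k * (c - 2 * k) = if Even m then c - m else m + 1 := by
  induction m with
  | zero => simp
  | succ n ih =>
    rw [sum_range_succ, ih]
    rcases Nat.even_or_odd n with h | h
    · rw [if_pos h, if_neg (Nat.not_even_iff_odd.mpr h.add_one), h.add_one.neg_one_pow]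
      push_cast; ring
    · rw [if_neg (Nat.not_even_iff_odd.mpr h), if_pos h.add_one, h.add_one.neg_one_pow]
      push_cast; ring

theorem Int.units_zpow_sub_natCast (ε : ℤˣ) (n : ℤ) (a : ℕ) : ε ^ (n - a) = ε ^ n * ε ^ a := by
  rw [zpow_sub, zpow_natCast, Int.units_inv_eq_self]

theorem sum_Icc_units_zpow_mul_eq_sum_range (ε : ℤˣ) {a b s : ℕ} (h : 2 * s ≤ a + b) :
    ∑ r ∈ Icc ((s : ℤ) - a) ((b : ℤ) - s), ((ε ^ r : ℤˣ) : ℤ) * ((a : ℤ) - b + 2 * r) =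
      -(ε : ℤ) ^ (a + s) *
        ∑ k ∈ range (a + b - 2 * s + 1), (ε : ℤ) ^ k * (((a + b - 2 * s : ℕ) : ℤ) - 2 * k) := by
  have hM : ((a + b - 2 * s : ℕ) : ℤ) = a + b - 2 * s := by omega
  rw [show (b : ℤ) - s = s - a + (a + b - 2 * s : ℕ) by omega, sum_Icc_add_natCast_eq_sum_range,
    mul_sum]
  refine sum_congr rfl fun k _ ↦ ?_
  rw [show (s : ℤ) - a + k = ((s + k : ℕ) : ℤ) - a by push_cast; ring,
    Int.units_zpow_sub_natCast, zpow_natCast]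
  push_cast
  rw [hM]
  ring

theorem sum_range_neg_one_pow_mul_sub_two_mul_of_le {a b s : ℕ} (h : 2 * s ≤ a + b) :
    ∑ k ∈ range (a + b - 2 * s + 1), (-1) ^ k * (((a + b - 2 * s : ℕ) : ℤ) - 2 * k) =
      if Even (a + b) then 0 else (a + b + 1 : ℤ) - 2 * s := by
  simp only [sum_range_neg_one_pow_mul_sub_two_mul, Nat.even_sub h, even_two_mul, iff_true,
    sub_self]
  push_cast [h]
  congr 1
  ring

theorem sum_range_neg_one_pow_mul_add_sub_two_mul (a b : ℕ) :
    ∑ s ∈ range (a + 1), -(-1) ^ (a + s) * ((a + b + 1 : ℤ) - 2 * s) =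
      if Even a then -((b : ℤ) + 1) else a + 1 := by
  simp only [pow_add, neg_mul, mul_assoc, sum_neg_distrib, ← mul_sum,
    sum_range_neg_one_pow_mul_sub_two_mul]
  rcases Nat.even_or_odd a with ha | ha
  · rw [if_pos ha, if_pos ha, ha.neg_one_pow]; ring
  · rw [if_neg (Nat.not_even_iff_odd.mpr ha), if_neg (Nat.not_even_iff_odd.mpr ha),
      ha.neg_one_pow]; ring

/-- For `ε ∈ {1, −1}` (encoded as a unit of `ℤ`) and integers
`0 ≤ a ≤ b`, the double sum `Σ_{s=0}^{a} Σ_{r=s−a}^{b−s} ε^r (a − b + 2r)` equals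
`a+1` if `ε = −1`, `a` odd, `b` even; `−(b+1)` if `ε = −1`, `a` even, `b` odd;
and `0` in all other cases. -/
theorem double_sum_eval (ε : ℤˣ) (a b : ℕ) (hab : a ≤ b) :
    (∑ s ∈ Finset.range (a + 1), ∑ r ∈ Finset.Icc ((s : ℤ) - (a : ℤ)) ((b : ℤ) - (s : ℤ)),
        ((ε ^ r : ℤˣ) : ℤ) * ((a : ℤ) - (b : ℤ) + 2 * r)) =
      if ε = -1 ∧ Odd a ∧ Even b then (a : ℤ) + 1
      else if ε = -1 ∧ Even a ∧ Odd b then -((b : ℤ) + 1)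
      else 0 := by
  have h2s : ∀ s ∈ range (a + 1), 2 * s ≤ a + b := fun s hs ↦ by simp at hs; omega
  rw [sum_congr rfl fun s hs ↦ sum_Icc_units_zpow_mul_eq_sum_range ε (h2s s hs)]
  rcases Int.units_eq_one_or ε with rfl | rfl
  · simp only [Units.val_one, one_pow, one_mul, sum_range_sub_two_mul, sub_self, mul_zero,
      sum_const_zero]
    simp
  simp only [Units.val_neg, Units.val_one, true_and]
  rw [sum_congr rfl fun s hs ↦ by rw [sum_range_neg_one_pow_mul_sub_two_mul_of_le (h2s s hs)]]
  rcases Nat.even_or_odd (a + b) with h | h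
  · simp only [h, if_true, mul_zero, sum_const_zero]
    rw [Nat.even_add] at h
    grind
  · simp only [Nat.not_even_iff_odd.mpr h, if_false, sum_range_neg_one_pow_mul_add_sub_two_mul]
    rw [Nat.odd_add] at h
    grind
end
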